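/- Let F₁, F₂ ∈ ℂ^{p×q} with α := ‖F₁‖₂ > 0 and β := ‖F₂‖₂ > 0, and define g(γ) := ‖[γF₁ γ⁻¹F₂]‖₂² (the squared spectral norm of the block row matrix) for γ > 0. Then inf over γ > 0 of g(γ) ≤ 2αβ, and for every γ > 0 with γ < √(β/(2α)) or γ > √(2β/α) one has g(γ) > 2αβ. Consequently, every γ* > 0 attaining the infimum of g lies in the closed interval [√(β/(2α)), √(2β/α)], and g evaluated at the geometric mean γ^{gm} := √(β/α) is an upper bound for the infimum. -/

import Mathlib

/-!
For `X = [γF₁  γ⁻¹F₂]` the Gram matrix `X Xᴴ = γ²F₁F₁ᴴ + γ⁻²F₂F₂ᴴ` is a sum of two positive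
semidefinite matrices, so the C⋆-identity and monotonicity of the norm on positive elements give
`max (γ²α², β²/γ²) ≤ g γ ≤ γ²α² + β²/γ²`. The upper bound equals `2αβ` at `γ = √(β/α)`, where the
two terms balance; left of `√(β/(2α))` the term `β²/γ²`, and right of `√(2β/α)` the term `γ²α²`,
already exceeds `2αβ`, so no minimizer lies there.
-/

open Matrix

/-- The spectral norm (largest singular value) of a complex matrix. -/
noncomputable def spNorm {k l : Type*} [Fintype k] [Fintype l] [DecidableEq k] [DecidableEq l]
    (A : Matrix k l ℂ) : ℝ :=
  ‖(Matrix.toEuclideanLin A).toContinuousLinearMap‖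

open scoped Matrix.Norms.L2Operator MatrixOrder ComplexOrder

namespace Matrix

variable {m n n₁ n₂ : Type*} [Fintype m] [Fintype n] [Fintype n₁] [Fintype n₂]
  [DecidableEq m] [DecidableEq n] [DecidableEq n₁] [DecidableEq n₂]

lemma spNorm_eq_l2_opNorm (A : Matrix m n ℂ) : spNorm A = ‖A‖ := rfl

lemma l2_opNorm_mul_conjTranspose_self (A : Matrix m n ℂ) : ‖A * Aᴴ‖ = ‖A‖ ^ 2 := by
  simpa [l2_opNorm_conjTranspose, sq] using l2_opNorm_conjTranspose_mul_self Aᴴ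

lemma l2_opNorm_fromCols_sq (A : Matrix m n₁ ℂ) (B : Matrix m n₂ ℂ) :
    ‖fromCols A B‖ ^ 2 = ‖A * Aᴴ + B * Bᴴ‖ := by
  rw [← l2_opNorm_mul_conjTranspose_self, conjTranspose_fromCols_eq_fromRows_conjTranspose,
    fromCols_mul_fromRows]

lemma l2_opNorm_fromCols_sq_le (A : Matrix m n₁ ℂ) (B : Matrix m n₂ ℂ) :
    ‖fromCols A B‖ ^ 2 ≤ ‖A‖ ^ 2 + ‖B‖ ^ 2 := by
  rw [l2_opNorm_fromCols_sq, ← l2_opNorm_mul_conjTranspose_self A,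
    ← l2_opNorm_mul_conjTranspose_self B]
  exact norm_add_le _ _

lemma sq_l2_opNorm_le_fromCols_left (A : Matrix m n₁ ℂ) (B : Matrix m n₂ ℂ) :
    ‖A‖ ^ 2 ≤ ‖fromCols A B‖ ^ 2 := by
  rw [l2_opNorm_fromCols_sq, ← l2_opNorm_mul_conjTranspose_self A]
  exact CStarAlgebra.norm_le_norm_of_nonneg_of_le (posSemidef_self_mul_conjTranspose A).nonneg
    (le_add_of_nonneg_right (posSemidef_self_mul_conjTranspose B).nonneg)

lemma sq_l2_opNorm_le_fromCols_right (A : Matrix m n₁ ℂ) (B : Matrix m n₂ ℂ) :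
    ‖B‖ ^ 2 ≤ ‖fromCols A B‖ ^ 2 := by
  rw [l2_opNorm_fromCols_sq, ← l2_opNorm_mul_conjTranspose_self B]
  exact CStarAlgebra.norm_le_norm_of_nonneg_of_le (posSemidef_self_mul_conjTranspose B).nonneg
    (le_add_of_nonneg_left (posSemidef_self_mul_conjTranspose A).nonneg)

lemma sq_spNorm_real_smul (c : ℝ) (A : Matrix m n ℂ) :
    spNorm (c • A) ^ 2 = c ^ 2 * spNorm A ^ 2 := by
  rw [spNorm_eq_l2_opNorm, spNorm_eq_l2_opNorm, ← Complex.coe_smul, norm_smul, Complex.norm_real,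
    Real.norm_eq_abs, mul_pow, sq_abs]

end Matrix

section Balancing

variable {a b γ : ℝ}

lemma sq_mul_sq_add_sq_div_sq_sqrt_div (ha : 0 < a) (hb : 0 < b) :
    √(b / a) ^ 2 * a ^ 2 + b ^ 2 / √(b / a) ^ 2 = 2 * a * b := by
  rw [Real.sq_sqrt (div_pos hb ha).le]
  field_simp
  ring

lemma two_mul_mul_lt_sq_div_sq_of_lt_sqrt (ha : 0 < a) (hb : 0 < b) (hγ : 0 < γ)
    (h : γ < √(b / (2 * a))) : 2 * a * b < b ^ 2 / γ ^ 2 := by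
  have hγsq : γ ^ 2 < b / (2 * a) := (Real.lt_sqrt hγ.le).mp h
  rw [lt_div_iff₀ (by positivity)] at hγsq
  rw [lt_div_iff₀ (by positivity)]
  nlinarith

lemma two_mul_mul_lt_sq_mul_sq_of_sqrt_lt (ha : 0 < a) (h : √(2 * b / a) < γ) :
    2 * a * b < γ ^ 2 * a ^ 2 := by
  have hγsq : 2 * b / a < γ ^ 2 := Real.lt_sq_of_sqrt_lt h
  rw [div_lt_iff₀ ha] at hγsq
  nlinarith

end Balancing

/-- for `g(γ) = ‖[γF₁ γ⁻¹F₂]‖₂²` with `α = ‖F₁‖₂ > 0`, `β = ‖F₂‖₂ > 0`: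
the infimum of `g` over `(0,∞)` is at most `2αβ`, `g(γ) > 2αβ` for `γ < √(β/(2α))` or
`γ > √(2β/α)`, so every minimizer lies in `[√(β/(2α)), √(2β/α)]`, and `g(√(β/α))` is an
upper bound for the infimum. -/
theorem stmt18 {p q : ℕ} (F₁ F₂ : Matrix (Fin p) (Fin q) ℂ)
    (α β : ℝ) (hα : α = spNorm F₁) (hβ : β = spNorm F₂)
    (hα0 : 0 < α) (hβ0 : 0 < β)
    (g : ℝ → ℝ)
    (hg : ∀ γ : ℝ, g γ = spNorm (fromCols (γ • F₁) (γ⁻¹ • F₂)) ^ 2) :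
    ((⨅ γ : {γ : ℝ // 0 < γ}, g (γ : ℝ)) ≤ 2 * α * β)
    ∧ (∀ γ : ℝ, 0 < γ →
        (γ < Real.sqrt (β / (2 * α)) ∨ Real.sqrt (2 * β / α) < γ) → 2 * α * β < g γ)
    ∧ (∀ γs : ℝ, 0 < γs → (∀ γ : ℝ, 0 < γ → g γs ≤ g γ) →
        γs ∈ Set.Icc (Real.sqrt (β / (2 * α))) (Real.sqrt (2 * β / α)))
    ∧ ((⨅ γ : {γ : ℝ // 0 < γ}, g (γ : ℝ)) ≤ g (Real.sqrt (β / α))) := by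
  have hsmul₂ (γ : ℝ) : spNorm (γ⁻¹ • F₂) ^ 2 = β ^ 2 / γ ^ 2 := by
    rw [sq_spNorm_real_smul, hβ, inv_pow, inv_mul_eq_div]
  have lower₁ (γ : ℝ) : γ ^ 2 * α ^ 2 ≤ g γ := by
    rw [hg, hα, ← sq_spNorm_real_smul, spNorm_eq_l2_opNorm, spNorm_eq_l2_opNorm]
    exact sq_l2_opNorm_le_fromCols_left _ _
  have lower₂ (γ : ℝ) : β ^ 2 / γ ^ 2 ≤ g γ := by
    rw [hg, ← hsmul₂, spNorm_eq_l2_opNorm, spNorm_eq_l2_opNorm]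
    exact sq_l2_opNorm_le_fromCols_right _ _
  have upper (γ : ℝ) : g γ ≤ γ ^ 2 * α ^ 2 + β ^ 2 / γ ^ 2 := by
    rw [hg, ← hsmul₂, hα, ← sq_spNorm_real_smul]
    exact l2_opNorm_fromCols_sq_le _ _
  have hgm_pos : 0 < √(β / α) := Real.sqrt_pos.mpr (div_pos hβ0 hα0)
  have hgm : g √(β / α) ≤ 2 * α * β :=
    (upper _).trans_eq (sq_mul_sq_add_sq_div_sq_sqrt_div hα0 hβ0)
  have hinf : (⨅ γ : {γ : ℝ // 0 < γ}, g γ) ≤ g √(β / α) :=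
    ciInf_le ⟨0, Set.forall_mem_range.mpr fun γ => (hg γ).symm ▸ sq_nonneg _⟩
      (⟨_, hgm_pos⟩ : {γ : ℝ // 0 < γ})
  have hout (γ : ℝ) (hγ : 0 < γ) (h : γ < √(β / (2 * α)) ∨ √(2 * β / α) < γ) :
      2 * α * β < g γ := by
    rcases h with hsmall | hlarge
    · exact (two_mul_mul_lt_sq_div_sq_of_lt_sqrt hα0 hβ0 hγ hsmall).trans_le (lower₂ γ)
    · exact (two_mul_mul_lt_sq_mul_sq_of_sqrt_lt hα0 hlarge).trans_le (lower₁ γ)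
  refine ⟨hinf.trans hgm, hout, fun γs hγs hmin => ?_, hinf⟩
  by_contra hnot
  rw [Set.mem_Icc, not_and_or, not_le, not_le] at hnot
  exact not_lt_of_ge ((hmin _ hgm_pos).trans hgm) (hout γs hγs hnot)
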